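/- For a (V,A)-tree T and a finite set S = {α1,...,αm} of adjunct trees that is adjoinable to T, the Parikh image of Adj⁺(T, S) is the linear set { Φ_A(T) + x1·Φ_A(α1) + ... + xm·Φ_A(αm) : xi ∈ ℕ, xi ≥ 1 for all i }. -/

import Mathlib

/-- Trees whose internal nodes are labeled by nonterminals in `V`
and whose leaves are labeled by elements of `L`. -/
inductive PTree (V L : Type) : Type
  | leaf : L → PTree V L
  | node : V → List (PTree V L) → PTree V L

namespace PTree

variable {V A L : Type}

/-- Leaf alphabet for contexts/adjunct trees: a letter-or-ε leaf, or the hole. -/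
abbrev Aug (A : Type) := Option A ⊕ Unit

/-- The root label of a tree: a nonterminal or a leaf label. -/
def rootLabel : PTree V L → V ⊕ L
  | .leaf a => .inr a
  | .node X _ => .inl X

/-- Set of nonterminals occurring in a tree. -/
def ntSet : PTree V L → Set V
  | .leaf _ => ∅
  | .node X ts => insert X ((ts.attach.map (fun ⟨t, _⟩ => ntSet t)).foldr (· ∪ ·) ∅)

/-- A tree is simple if no nonterminal occurs twice on a root-to-leaf path. -/
def Simple : PTree V L → Prop
  | .leaf _ => True
  | .node X ts => ∀ t ∈ ts, X ∉ ntSet t ∧ Simple t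

/-- Number of holes in a context / adjunct tree. -/
def holes : PTree V (Aug A) → ℕ
  | .leaf (.inr _) => 1
  | .leaf (.inl _) => 0
  | .node _ ts => (ts.attach.map (fun ⟨t, _⟩ => holes t)).sum

/-- Substitute the tree `T` for every hole. -/
def subst (T : PTree V (Option A)) : PTree V (Aug A) → PTree V (Option A)
  | .leaf (.inl a) => .leaf a
  | .leaf (.inr _) => T
  | .node X ts => .node X (ts.attach.map (fun ⟨t, _⟩ => subst T t))

/-- Embed a `(V,A)`-tree into trees with holes (no holes created). -/
def toAug : PTree V (Option A) → PTree V (Aug A)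
  | .leaf a => .leaf (.inl a)
  | .node X ts => .node X (ts.attach.map (fun ⟨t, _⟩ => toAug t))

/-- Yield of a `(V,A)`-tree. -/
def yield : PTree V (Option A) → List A
  | .leaf none => []
  | .leaf (some a) => [a]
  | .node _ ts => (ts.attach.map (fun ⟨t, _⟩ => yield t)).flatten

/-- Yield of a context / adjunct tree, holes contributing `ε`. -/
def yieldA : PTree V (Aug A) → List A
  | .leaf (.inl none) => []
  | .leaf (.inl (some a)) => [a]
  | .leaf (.inr _) => []
  | .node _ ts => (ts.attach.map (fun ⟨t, _⟩ => yieldA t)).flatten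

/-- Height of a tree. -/
def height : PTree V L → ℕ
  | .leaf _ => 0
  | .node _ ts => (ts.attach.map (fun ⟨t, _⟩ => height t)).foldr max 0 + 1

/-- Size (number of nodes) of a tree. -/
def tsize : PTree V L → ℕ
  | .leaf _ => 1
  | .node _ ts => (ts.attach.map (fun ⟨t, _⟩ => tsize t)).sum + 1

end PTree

open PTree

/-- A context-free grammar over `A` with nonterminals `V`:
a finite set of rules `D ⊆ V × (V ∪ A ∪ {ε})⁺` and a start symbol. -/
structure CFG (V A : Type) where
  rules : Set (V × List (V ⊕ Option A))
  rules_fin : rules.Finite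
  start : V

variable {V A : Type}

/-- A tree is a valid derivation w.r.t. the rules `D`. -/
inductive IsDeriv (D : Set (V × List (V ⊕ Option A))) : PTree V (Option A) → Prop
  | leaf (a : Option A) : IsDeriv D (.leaf a)
  | node (X : V) (ts : List (PTree V (Option A))) :
      (X, ts.map rootLabel) ∈ D → (∀ t ∈ ts, IsDeriv D t) → IsDeriv D (.node X ts)

/-- The set `Trees(G)` of derivation trees of `G`. -/
def TreesSet (G : CFG V A) : Set (PTree V (Option A)) :=
  {T | T.rootLabel = .inl G.start ∧ IsDeriv G.rules T}

/-- The language of `G`: yields of derivation trees. -/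
def lang (G : CFG V A) : Set (List A) := PTree.yield '' TreesSet G

/-- An adjunct tree is represented by its root nonterminal `X` together with a tree
over `V, A ∪ {X}` (the distinguished leaf `X` being the hole). -/
abbrev AdjT (V A : Type) := V × PTree V (Aug A)

/-- Wellformedness of an adjunct tree: root node labeled `X`, exactly one `X`-leaf. -/
def WFAdjunct (p : AdjT V A) : Prop :=
  (∃ ts, p.2 = PTree.node p.1 ts) ∧ p.2.holes = 1

/-- A simple adjunct tree: no nonterminal repeats on paths from a child of the root. -/
def SimpleAdjunct (p : AdjT V A) : Prop :=
  ∃ ts, p.2 = PTree.node p.1 ts ∧ ∀ t ∈ ts, Simple t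

/-- Root label of a subtree of an adjunct tree with root nonterminal `X`:
the hole leaf is labeled `X`. -/
def augRoot (X : V) : PTree V (Aug A) → V ⊕ Option A
  | .leaf (.inl a) => .inr a
  | .leaf (.inr _) => .inl X
  | .node Y _ => .inl Y

/-- An adjunct tree is extracted from derivation trees of `D`: every internal
node respects the rules. -/
inductive IsDerivA (D : Set (V × List (V ⊕ Option A))) (X : V) : PTree V (Aug A) → Prop
  | leaf (a : Aug A) : IsDerivA D X (.leaf a)
  | node (Y : V) (ts : List (PTree V (Aug A))) :
      (Y, ts.map (augRoot X)) ∈ D → (∀ t ∈ ts, IsDerivA D X t) → IsDerivA D X (.node Y ts)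

/-- `T ⊢_α T'` : `T'` is obtained from `T` by adjoining the adjunct tree `α`
at some occurrence of its root nonterminal. -/
def Adjoins (α : AdjT V A) (T T' : PTree V (Option A)) : Prop :=
  WFAdjunct α ∧
  ∃ (C : PTree V (Aug A)) (ts : List (PTree V (Option A))),
    C.holes = 1 ∧
    subst (.node α.1 ts) C = T ∧
    subst (subst (.node α.1 ts) α.2) C = T'

/-- `AdjChain L T T'` : `T'` is obtained from `T` by successively adjoining
the adjunct trees listed in `L`. -/
def AdjChain : List (AdjT V A) → PTree V (Option A) → PTree V (Option A) → Prop
  | [], T, T' => T = T'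
  | α :: L, T, T' => ∃ T₁, Adjoins α T T₁ ∧ AdjChain L T₁ T'

/-- `Adj⁺(T,S)` : trees obtained from `T` using exactly the adjunct trees of `S`,
each at least once. -/
def AdjPlus (T : PTree V (Option A)) (S : Set (AdjT V A)) : Set (PTree V (Option A)) :=
  {T' | ∃ L : List (AdjT V A), AdjChain L T T' ∧ {α | α ∈ L} = S}

/-- `Adj(T,S)` : trees obtained from `T` using adjunct trees of `S`, arbitrarily often. -/
def AdjStar (T : PTree V (Option A)) (S : Set (AdjT V A)) : Set (PTree V (Option A)) :=
  {T' | ∃ L : List (AdjT V A), AdjChain L T T' ∧ {α | α ∈ L} ⊆ S}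

namespace PTree
variable [DecidableEq V]

mutual
/-- Find the leftmost `X`-rooted subtree: returns the surrounding context
(with a hole in its place) and the subtree. -/
def extract (X : V) : PTree V (Option A) → Option (PTree V (Aug A) × PTree V (Option A))
  | .leaf _ => none
  | .node Y ts =>
    if Y = X then some (.leaf (.inr ()), .node Y ts)
    else match extractL X ts with
      | none => none
      | some (Cs, sub) => some (.node Y Cs, sub)

/-- List version of `extract`. -/
def extractL (X : V) : List (PTree V (Option A)) → Option (List (PTree V (Aug A)) × PTree V (Option A))
  | [] => none
  | t :: ts =>
    match extract X t with
    | some (C, sub) => some (C :: ts.map toAug, sub)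
    | none =>
      match extractL X ts with
      | some (Cs, sub) => some (toAug t :: Cs, sub)
      | none => none
end

/-- Takahashi's decomposition of a tree into a simple tree and a set of
simple adjunct trees. -/
def decomp : PTree V (Option A) → PTree V (Option A) × Set (AdjT V A)
  | .leaf a => (.leaf a, ∅)
  | .node X ts =>
    let rs := ts.attach.map (fun ⟨t, _⟩ => decomp t)
    let S := (rs.map Prod.snd).foldr (· ∪ ·) ∅
    match extractL X (rs.map Prod.fst) with
    | none => (.node X (rs.map Prod.fst), S)
    | some (Cs, sub) => (sub, insert (X, PTree.node X Cs) S)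

end PTree

/-- The simple trees arising from decompositions of derivation trees. -/
def sTrees (G : CFG V A) [DecidableEq V] : Set (PTree V (Option A)) :=
  {T' | ∃ T ∈ TreesSet G, (decomp T).1 = T'}

/-- The simple adjunct trees arising from decompositions of derivation trees. -/
def sLoops (G : CFG V A) [DecidableEq V] : Set (AdjT V A) :=
  {α | ∃ T ∈ TreesSet G, α ∈ (decomp T).2}

/-- Parikh map. -/
def parikh [DecidableEq A] (w : List A) : A → ℕ := fun a => w.count a

/-- Linear subsets of `ℕ^A`. -/
def IsLinear (S : Set (A → ℕ)) : Prop :=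
  ∃ (v₀ : A → ℕ) (k : ℕ) (v : Fin k → A → ℕ),
    S = {u | ∃ x : Fin k → ℕ, u = v₀ + ∑ i, x i • v i}

/-- Semilinear subsets of `ℕ^A`: finite unions of linear sets. -/
def IsSemilinear (S : Set (A → ℕ)) : Prop :=
  ∃ (n : ℕ) (f : Fin n → Set (A → ℕ)), (∀ i, IsLinear (f i)) ∧ S = ⋃ i, f i

/-!
Adjoining an adjunct tree `β` adds `Φ(β)` to the Parikh vector, so a chain using `αᵢ` exactly
`xᵢ` times yields `Φ(T) + ∑ xᵢ Φ(αᵢ)`. Conversely, `β` can be adjoined to a tree exactly when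
its root nonterminal occurs in it, and adjoining only adds the nonterminals of `β`. Hence, in a
chain witnessing that `S` is adjoinable, we may keep only the first occurrence of each `αᵢ` and
repeat it `xᵢ` times in place: the resulting sequence can still be adjoined.
-/

namespace PTree

variable {V A L : Type}

@[elab_as_elim]
theorem ind {P : PTree V L → Prop} (leaf : ∀ a, P (.leaf a))
    (node : ∀ X ts, (∀ t ∈ ts, P t) → P (.node X ts)) : ∀ t, P t
  | .leaf a => leaf a
  | .node X ts => node X ts fun t _ => ind leaf node t

@[simp] theorem ntSet_leaf (a : L) : ntSet (.leaf a : PTree V L) = ∅ := by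
  simp [ntSet]

theorem mem_ntSet_node {x X : V} {ts : List (PTree V L)} :
    x ∈ ntSet (.node X ts) ↔ x = X ∨ ∃ t ∈ ts, x ∈ ntSet t := by
  have mem_foldr_union : ∀ ss : List (Set V), x ∈ ss.foldr (· ∪ ·) ∅ ↔ ∃ s ∈ ss, x ∈ s := by
    intro ss; induction ss <;> simp_all
  simp [ntSet, mem_foldr_union]

@[simp] theorem subst_node (S : PTree V (Option A)) (X : V) (ts : List (PTree V (Aug A))) :
    subst S (.node X ts) = .node X (ts.map (subst S)) := by
  simp [subst]

@[simp] theorem holes_node (X : V) (ts : List (PTree V (Aug A))) :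
    holes (.node X ts) = (ts.map holes).sum := by
  simp [holes]

@[simp] theorem yield_node (X : V) (ts : List (PTree V (Option A))) :
    yield (.node X ts) = (ts.map yield).flatten := by
  simp [yield]

@[simp] theorem yieldA_node (X : V) (ts : List (PTree V (Aug A))) :
    yieldA (.node X ts) = (ts.map yieldA).flatten := by
  simp [yieldA]

@[simp] theorem toAug_node (X : V) (ts : List (PTree V (Option A))) :
    toAug (.node X ts) = .node X (ts.map toAug) := by
  simp [toAug]

@[simp] theorem subst_toAug (S : PTree V (Option A)) (t : PTree V (Option A)) :
    subst S (toAug t) = t := by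
  induction t using PTree.ind with
  | leaf a => simp [toAug, subst]
  | node X ts ih =>
    rw [toAug_node, subst_node, List.map_map]
    exact congrArg _ ((List.map_congr_left ih).trans (List.map_id ts))

@[simp] theorem holes_toAug (t : PTree V (Option A)) : holes (toAug t) = 0 := by
  induction t using PTree.ind with
  | leaf a => simp [toAug, holes]
  | node X ts ih => simp [Function.comp_def, List.map_congr_left ih]

theorem ntSet_subst_subset (S : PTree V (Option A)) (C : PTree V (Aug A)) :
    ntSet (subst S C) ⊆ ntSet C ∪ ntSet S := by
  induction C using PTree.ind with
  | leaf a => rcases a with a | u <;> simp [subst]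
  | node X ts ih =>
    intro x hx
    simp only [subst_node, mem_ntSet_node, List.mem_map] at hx
    rcases hx with rfl | ⟨_, ⟨t, ht, rfl⟩, hxt⟩
    · exact Or.inl (mem_ntSet_node.2 (Or.inl rfl))
    · exact (ih t ht hxt).imp_left fun h => mem_ntSet_node.2 (Or.inr ⟨t, ht, h⟩)

theorem ntSet_subset_ntSet_subst (S : PTree V (Option A)) (C : PTree V (Aug A)) :
    ntSet C ⊆ ntSet (subst S C) := by
  induction C using PTree.ind with
  | leaf a => simp
  | node X ts ih =>
    intro x hx
    rw [subst_node, mem_ntSet_node]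
    rcases mem_ntSet_node.1 hx with rfl | ⟨t, ht, hxt⟩
    · exact Or.inl rfl
    · exact Or.inr ⟨subst S t, List.mem_map_of_mem ht, ih t ht hxt⟩

theorem ntSet_subset_ntSet_subst_of_pos {C : PTree V (Aug A)} (hC : 0 < holes C)
    (S : PTree V (Option A)) : ntSet S ⊆ ntSet (subst S C) := by
  induction C using PTree.ind with
  | leaf a => rcases a with a | u <;> simp_all [holes, subst]
  | node X ts ih =>
    obtain ⟨t, ht, hpos⟩ : ∃ t ∈ ts, 0 < holes t := by
      simpa [List.sum_pos_iff_exists_pos_nat] using hC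
    intro x hx
    rw [subst_node, mem_ntSet_node]
    exact Or.inr ⟨subst S t, List.mem_map_of_mem ht, ih t ht hpos hx⟩

theorem ntSet_subst {C : PTree V (Aug A)} (hC : holes C = 1) (S : PTree V (Option A)) :
    ntSet (subst S C) = ntSet C ∪ ntSet S :=
  (ntSet_subst_subset S C).antisymm <| Set.union_subset (ntSet_subset_ntSet_subst S C)
    (ntSet_subset_ntSet_subst_of_pos (by omega) S)

theorem exists_subst_eq_of_mem_ntSet {x : V} {U : PTree V (Option A)} (hx : x ∈ ntSet U) :
    ∃ (C : PTree V (Aug A)) (ts : List (PTree V (Option A))),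
      holes C = 1 ∧ subst (.node x ts) C = U := by
  induction U using PTree.ind with
  | leaf a => simp at hx
  | node Y ts ih =>
    by_cases hxY : x = Y
    · subst hxY
      exact ⟨.leaf (.inr ()), ts, by simp [holes], by simp [subst]⟩
    obtain ⟨t, ht, hxt⟩ := (mem_ntSet_node.1 hx).resolve_left hxY
    obtain ⟨C, ts', hC, rfl⟩ := ih t ht hxt
    obtain ⟨l, r, rfl⟩ := List.append_of_mem ht
    refine ⟨.node Y (l.map toAug ++ C :: r.map toAug), ts', ?_, ?_⟩
    · simp [Function.comp_def, hC]
    · simp [Function.comp_def]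

section Parikh

variable [DecidableEq A]

@[simp] theorem parikh_nil : parikh ([] : List A) = 0 := by
  funext a; simp [parikh]

theorem parikh_append (l₁ l₂ : List A) : parikh (l₁ ++ l₂) = parikh l₁ + parikh l₂ := by
  funext a; simp [parikh, List.count_append]

theorem parikh_flatten (ls : List (List A)) : parikh ls.flatten = (ls.map parikh).sum := by
  induction ls with
  | nil => simp
  | cons l ls ih => simp [parikh_append, ih]

theorem parikh_yield_subst (S : PTree V (Option A)) (C : PTree V (Aug A)) :
    parikh (yield (subst S C)) = parikh (yieldA C) + holes C • parikh (yield S) := by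
  induction C using PTree.ind with
  | leaf a => rcases a with (_ | a) | u <;> simp [subst, yield, yieldA, holes]
  | node X ts ih =>
    simp only [subst_node, yield_node, yieldA_node, holes_node, parikh_flatten, List.map_map,
      List.sum_smul, ← List.sum_map_add]
    exact congrArg List.sum (List.map_congr_left ih)

end Parikh

end PTree

section Adjoining

variable {V A : Type}

theorem exists_adjoins_iff {β : AdjT V A} {U : PTree V (Option A)} :
    (∃ U', Adjoins β U U') ↔ WFAdjunct β ∧ β.1 ∈ ntSet U := by
  constructor
  · rintro ⟨_, hwf, C, ts, hC, rfl, -⟩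
    rw [ntSet_subst hC]
    exact ⟨hwf, Or.inr (mem_ntSet_node.2 (Or.inl rfl))⟩
  · rintro ⟨hwf, hroot⟩
    obtain ⟨C, ts, hC, rfl⟩ := exists_subst_eq_of_mem_ntSet hroot
    exact ⟨_, hwf, C, ts, hC, rfl, rfl⟩

theorem Adjoins.ntSet_eq {β : AdjT V A} {U U' : PTree V (Option A)} (h : Adjoins β U U') :
    ntSet U' = ntSet U ∪ ntSet β.2 := by
  obtain ⟨⟨_, hβ⟩, C, ts, hC, rfl, rfl⟩ := h
  rw [ntSet_subst hC, ntSet_subst hC, ntSet_subst hβ, Set.union_assoc, Set.union_comm (ntSet β.2)]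

theorem Adjoins.parikh_yield [DecidableEq A] {β : AdjT V A} {U U' : PTree V (Option A)}
    (h : Adjoins β U U') : parikh (yield U') = parikh (yield U) + parikh (yieldA β.2) := by
  obtain ⟨⟨_, hβ⟩, C, ts, hC, rfl, rfl⟩ := h
  simp only [parikh_yield_subst, hC, hβ, one_smul]
  abel

theorem AdjChain.parikh_yield [DecidableEq A] {L : List (AdjT V A)}
    {U U' : PTree V (Option A)} (h : AdjChain L U U') :
    parikh (yield U') = parikh (yield U) + (L.map fun β => parikh (yieldA β.2)).sum := by
  induction L generalizing U with
  | nil => cases h; simp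
  | cons β L ih =>
    obtain ⟨U₁, hβ, hL⟩ := h
    rw [ih hL, hβ.parikh_yield, List.map_cons, List.sum_cons, add_assoc]

/-- `s` plays the role of the nonterminals of the current tree: each adjunct tree of the list
can be adjoined when its turn comes. -/
def AdjSeqAdmissible : List (AdjT V A) → Set V → Prop
  | [], _ => True
  | β :: L, s => β.1 ∈ s ∧ AdjSeqAdmissible L (s ∪ ntSet β.2)

theorem exists_adjChain_iff {L : List (AdjT V A)} {U : PTree V (Option A)} :
    (∃ U', AdjChain L U U') ↔ (∀ β ∈ L, WFAdjunct β) ∧ AdjSeqAdmissible L (ntSet U) := by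
  induction L generalizing U with
  | nil => simp [AdjChain, AdjSeqAdmissible]
  | cons β L ih =>
    simp only [AdjChain, AdjSeqAdmissible, List.forall_mem_cons]
    constructor
    · rintro ⟨U', U₁, hβ, hL⟩
      obtain ⟨hwf, hadm⟩ := ih.1 ⟨U', hL⟩
      obtain ⟨hβwf, hroot⟩ := exists_adjoins_iff.1 ⟨U₁, hβ⟩
      exact ⟨⟨hβwf, hwf⟩, hroot, hβ.ntSet_eq ▸ hadm⟩
    · rintro ⟨⟨hβwf, hwf⟩, hroot, hadm⟩
      obtain ⟨U₁, hβ⟩ := exists_adjoins_iff.2 ⟨hβwf, hroot⟩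
      obtain ⟨U', hL⟩ := ih.2 ⟨hwf, hβ.ntSet_eq ▸ hadm⟩
      exact ⟨U', U₁, hβ, hL⟩

end Adjoining

theorem List.sum_map_eq_sum_count_smul {ι κ M : Type*} [Fintype ι] [DecidableEq κ]
    [AddCommMonoid M] {α : ι → κ} (hα : Function.Injective α) {L : List κ}
    (hL : {x | x ∈ L} = Set.range α) (f : κ → M) :
    (L.map f).sum = ∑ i, L.count (α i) • f (α i) := by
  have hfin : L.toFinset = Finset.univ.image α := by
    ext x
    simpa using Set.ext_iff.1 hL x
  rw [Finset.sum_list_map_count, hfin, Finset.sum_image fun i _ j _ h => hα h]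

namespace AdjSeqAdmissible

variable {V A : Type}

theorem replicate_append {β : AdjT V A} {M : List (AdjT V A)} {s : Set V} (hβ : β.1 ∈ s)
    (hM : AdjSeqAdmissible M (s ∪ ntSet β.2)) (n : ℕ) :
    AdjSeqAdmissible (List.replicate (n + 1) β ++ M) s := by
  induction n generalizing s with
  | zero => exact ⟨hβ, hM⟩
  | succ n ih =>
    refine ⟨hβ, ih (Or.inl hβ) ?_⟩
    rwa [Set.union_assoc, Set.union_self]

variable [DecidableEq (AdjT V A)]

theorem filter_ne {L : List (AdjT V A)} {s : Set V} (h : AdjSeqAdmissible L s)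
    {β : AdjT V A} (hβ : ntSet β.2 ⊆ s) : AdjSeqAdmissible (L.filter (· ≠ β)) s := by
  induction L generalizing s with
  | nil => trivial
  | cons γ L ih =>
    by_cases hγ : γ = β
    · subst hγ
      simpa [List.filter_cons, Set.union_eq_self_of_subset_right hβ] using
        ih h.2 (hβ.trans Set.subset_union_left)
    · rw [List.filter_cons_of_pos (by simpa)]
      exact ⟨h.1, ih h.2 (hβ.trans Set.subset_union_left)⟩

/-- Keep the first occurrence of each adjunct tree, repeated as often as prescribed. -/
theorem exists_count_eq (need : AdjT V A → ℕ) :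
    ∀ {L : List (AdjT V A)} {s : Set V}, AdjSeqAdmissible L s → (∀ β ∈ L, 0 < need β) →
      ∃ L', AdjSeqAdmissible L' s ∧ (∀ β, β ∈ L' ↔ β ∈ L) ∧ ∀ β ∈ L, L'.count β = need β
  | [], _, _, _ => ⟨[], trivial, by simp, by simp⟩
  | β :: L, s, ⟨hroot, hadm⟩, hneed => by
    obtain ⟨L₀, hadm₀, hmem₀, hcount₀⟩ := exists_count_eq need
      (hadm.filter_ne Set.subset_union_right) fun γ hγ => hneed γ (by simp_all)
    obtain ⟨n, hn⟩ := Nat.exists_eq_add_one.2 (hneed β List.mem_cons_self)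
    have hβ₀ : β ∉ L₀ := by simp [hmem₀]
    refine ⟨List.replicate (n + 1) β ++ L₀, replicate_append hroot hadm₀ n, ?_, ?_⟩
    · intro γ
      by_cases hγ : γ = β <;> simp [hmem₀, hγ]
    · intro γ hγ
      by_cases hγβ : γ = β
      · subst hγβ
        simp [List.count_eq_zero_of_not_mem hβ₀, hn]
      · rw [List.count_append, List.count_replicate,
          hcount₀ γ (List.mem_filter.2 ⟨(List.mem_cons.1 hγ).resolve_left hγβ, by simpa⟩)]
        simp [Ne.symm hγβ]
termination_by L => L.length
decreasing_by exact Nat.lt_succ_of_le (List.length_filter_le _ _)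

end AdjSeqAdmissible

/-- For `S = {α₁,…,α_m}` adjoinable to `T`, the Parikh image of
`Adj⁺(T,S)` is the linear set `{Φ(T) + Σ xᵢ·Φ(αᵢ) : xᵢ ≥ 1}`. -/
theorem parikh_adjplus {V A : Type} [DecidableEq A] (T : PTree V (Option A))
    (m : ℕ) (α : Fin m → AdjT V A) (hinj : Function.Injective α)
    (hadj : (AdjPlus T (Set.range α)).Nonempty) :
    (fun T' => parikh (PTree.yield T')) '' AdjPlus T (Set.range α) =
      {v | ∃ x : Fin m → ℕ, (∀ i, 1 ≤ x i) ∧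
        v = parikh T.yield + ∑ i, x i • parikh (PTree.yieldA (α i).2)} := by
  let _ : DecidableEq (AdjT V A) := Classical.decEq _
  have hmem {L : List (AdjT V A)} (hL : {β | β ∈ L} = Set.range α) (i : Fin m) : α i ∈ L :=
    (Set.ext_iff.1 hL (α i)).2 ⟨i, rfl⟩
  have hparikh {L : List (AdjT V A)} (hL : {β | β ∈ L} = Set.range α) {U : PTree V (Option A)}
      (h : AdjChain L T U) : parikh (yield U) =
        parikh T.yield + ∑ i, L.count (α i) • parikh (yieldA (α i).2) := by
    rw [h.parikh_yield, List.sum_map_eq_sum_count_smul hinj hL]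
  ext v
  constructor
  · rintro ⟨U, ⟨L, hchain, hL⟩, rfl⟩
    exact ⟨fun i => L.count (α i), fun i => List.count_pos_iff.2 (hmem hL i), hparikh hL hchain⟩
  · rintro ⟨x, hx, rfl⟩
    obtain ⟨_, L, hchain, hL⟩ := hadj
    obtain ⟨hwf, hadm⟩ := exists_adjChain_iff.1 ⟨_, hchain⟩
    have hneed : ∀ β ∈ L, 0 < Function.extend α x 1 β := by
      intro β hβ
      obtain ⟨i, rfl⟩ : β ∈ Set.range α := hL ▸ hβ
      rw [hinj.extend_apply]
      exact hx i
    obtain ⟨L', hadm', hmem', hcount'⟩ := hadm.exists_count_eq _ hneed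
    have hL' : {β | β ∈ L'} = Set.range α := hL ▸ Set.ext hmem'
    obtain ⟨U, hchain'⟩ := exists_adjChain_iff.2 ⟨fun β hβ => hwf β ((hmem' β).1 hβ), hadm'⟩
    refine ⟨U, ⟨L', hchain', hL'⟩, (hparikh hL' hchain').trans ?_⟩
    simp only [hcount' _ (hmem hL _), hinj.extend_apply]
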